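/- Let Q be a solution to the (n,2)-queens problem (a non-attacking set of n queens on the (n,2)-board), let 1 ≤ k < n, and suppose the corner subsquare {n−k+1,…,n}² contains exactly p queens of Q. Then the restriction Q ∩ {1,…,n−k}² is a non-attacking set of exactly n − 2k + p queens on the (n−k,2)-board. -/

import Mathlib

/-!
In a solution of the `(n,2)`-queens problem every row and every column carries exactly one
queen. Cut the board at `m = n - k` in both directions. The columns `≤ m` hold `m` queens,
split between the lower-left square and the upper-left block; the rows `> m` hold `k`
queens, split between the upper-left block and the corner square with its `p` queens.
Eliminating the upper-left block leaves `m - (k - p)` queens in the lower-left square.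
-/

/-- A point `q` lies on the `(n,d)`-board, i.e. all coordinates are in `{1,…,n}`. -/
def onBoard (n d : ℕ) (q : Fin d → ℕ) : Prop :=
  ∀ i, 1 ≤ q i ∧ q i ≤ n

/-- Queen `a` attacks queen `b`: there are an integer `m` and a nonzero vector
`ε ∈ {-1,0,1}^d` with `a i = ε i * m + b i` for all `i`. -/
def attacks {d : ℕ} (a b : Fin d → ℕ) : Prop :=
  ∃ (m : ℤ) (ε : Fin d → ℤ), (∀ i, ε i = -1 ∨ ε i = 0 ∨ ε i = 1) ∧ ε ≠ 0 ∧
    ∀ i, (a i : ℤ) = ε i * m + (b i : ℤ)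

/-- A set of queens is non-attacking if no two distinct members attack each other. -/
def nonAttacking {d : ℕ} (Q : Finset (Fin d → ℕ)) : Prop :=
  ∀ a ∈ Q, ∀ b ∈ Q, a ≠ b → ¬ attacks a b

/-- A partial solution on the `(n,d)`-board: a non-attacking set fitting the board. -/
def isPartial (n d : ℕ) (Q : Finset (Fin d → ℕ)) : Prop :=
  (∀ q ∈ Q, onBoard n d q) ∧ nonAttacking Q

/-- A solution to the `(n,d)`-queens problem: a non-attacking set of `n^(d-1)` queens. -/
def isSolution (n d : ℕ) (Q : Finset (Fin d → ℕ)) : Prop :=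
  isPartial n d Q ∧ Q.card = n ^ (d - 1)

/-- The `(n,d)`-board as a finite set. -/
def boardFinset (n d : ℕ) : Finset (Fin d → ℕ) :=
  Fintype.piFinset fun _ => Finset.Icc 1 n

/-- `Qmax n d` : the maximum cardinality of a non-attacking set on the `(n,d)`-board. -/
noncomputable def Qmax (n d : ℕ) : ℕ :=
  sSup {k | ∃ Q : Finset (Fin d → ℕ), isPartial n d Q ∧ Q.card = k}

open Finset

lemma attacks_of_forall_ne_eq {d : ℕ} {a b : Fin d → ℕ} (i : Fin d)
    (h : ∀ l, l ≠ i → a l = b l) : attacks a b := by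
  refine ⟨(a i : ℤ) - b i, Pi.single i 1, fun l => ?_, ?_, fun l => ?_⟩
  · by_cases hl : l = i <;> simp [hl]
  · exact fun h0 => by simpa using congrFun h0 i
  · by_cases hl : l = i
    · subst hl; simp
    · simp [hl, h l hl]

lemma attacks_of_apply_eq {a b : Fin 2 → ℕ} (j : Fin 2) (h : a j = b j) : attacks a b :=
  attacks_of_forall_ne_eq (j + 1) fun l hl => by
    have : l = j := by fin_cases j <;> fin_cases l <;> simp_all
    rwa [this]

lemma nonAttacking.injOn_apply {Q : Finset (Fin 2 → ℕ)} (hQ : nonAttacking Q) (j : Fin 2) :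
    Set.InjOn (fun q : Fin 2 → ℕ => q j) (Q : Set (Fin 2 → ℕ)) := fun a ha b hb hab => by
  by_contra hne
  exact hQ a ha b hb hne (attacks_of_apply_eq j hab)

lemma isPartial.filter_forall_le {n d : ℕ} {Q : Finset (Fin d → ℕ)} (hQ : isPartial n d Q)
    (m : ℕ) : isPartial m d (Q.filter fun q => ∀ i, q i ≤ m) := by
  refine ⟨fun q hq i => ?_, fun a ha b hb => hQ.2 a (mem_filter.1 ha).1 b (mem_filter.1 hb).1⟩
  rw [mem_filter] at hq
  exact ⟨(hQ.1 q hq.1 i).1, hq.2 i⟩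

namespace isSolution

variable {n : ℕ} {Q : Finset (Fin 2 → ℕ)}

lemma card_eq (hQ : isSolution n 2 Q) : #Q = n := by
  simpa using hQ.2

lemma image_apply (hQ : isSolution n 2 Q) (j : Fin 2) :
    Q.image (fun q => q j) = Icc 1 n := by
  refine eq_of_subset_of_card_le (fun x hx => ?_) ?_
  · obtain ⟨q, hq, rfl⟩ := mem_image.1 hx
    exact mem_Icc.2 (hQ.1.1 q hq j)
  · rw [card_image_of_injOn (nonAttacking.injOn_apply hQ.1.2 j), hQ.card_eq, Nat.card_Icc,
      Nat.add_sub_cancel]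

lemma card_filter_apply_le (hQ : isSolution n 2 Q) (j : Fin 2) {m : ℕ} (hm : m ≤ n) :
    #(Q.filter fun q => q j ≤ m) = m := by
  have hIcc : (Icc 1 n).filter (· ≤ m) = Icc 1 m := by
    ext x
    simp only [mem_filter, mem_Icc]
    omega
  rw [← card_image_of_injOn ((nonAttacking.injOn_apply hQ.1.2 j).mono (filter_subset _ _)),
    ← filter_image (p := (· ≤ m)), hQ.image_apply, hIcc, Nat.card_Icc, Nat.add_sub_cancel]

lemma card_filter_not_apply_le (hQ : isSolution n 2 Q) (j : Fin 2) {m : ℕ} (hm : m ≤ n) :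
    #(Q.filter fun q => ¬ q j ≤ m) = n - m := by
  have := card_filter_add_card_filter_not (s := Q) (fun q => q j ≤ m)
  rw [hQ.card_filter_apply_le j hm, hQ.card_eq] at this
  omega

end isSolution

lemma Finset.card_filter_and_eq {α : Type*} (s : Finset α) (P R : α → Prop)
    [DecidablePred P] [DecidablePred R] :
    (#(s.filter fun a => P a ∧ R a) : ℤ) =
      #(s.filter P) - #(s.filter fun a => ¬ R a) + #(s.filter fun a => ¬ P a ∧ ¬ R a) := by
  have hP := card_filter_add_card_filter_not (s := s.filter P) R
  have hR := card_filter_add_card_filter_not (s := s.filter fun a => ¬ R a) P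
  simp only [filter_filter, and_comm] at hP hR ⊢
  omega

theorem subsquare_heuristic_2d_general (n k p : ℕ) (hkn : k < n)
    (Q : Finset (Fin 2 → ℕ)) (hQ : isSolution n 2 Q)
    (hp : (Q.filter (fun q => ∀ i, n - k + 1 ≤ q i)).card = p) :
    isPartial (n - k) 2 (Q.filter (fun q => ∀ i, q i ≤ n - k)) ∧
    ((Q.filter (fun q => ∀ i, q i ≤ n - k)).card : ℤ) =
      (n : ℤ) - 2 * k + p := by
  refine ⟨isPartial.filter_forall_le hQ.1 (n - k), ?_⟩
  have hleft := hQ.card_filter_apply_le 0 (m := n - k) (by omega)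
  have htop := hQ.card_filter_not_apply_le 1 (m := n - k) (by omega)
  have hlower : Q.filter (fun q => ∀ i, q i ≤ n - k) =
      Q.filter (fun q => q 0 ≤ n - k ∧ q 1 ≤ n - k) := by
    simp only [Fin.forall_fin_two]
  have hcorner : Q.filter (fun q => ∀ i, n - k + 1 ≤ q i) =
      Q.filter (fun q => ¬ q 0 ≤ n - k ∧ ¬ q 1 ≤ n - k) :=
    filter_congr fun q _ => by simp only [Fin.forall_fin_two]; omega
  rw [hlower, card_filter_and_eq, hleft, htop, ← hcorner, hp]
  omega

/-- Subsquare heuristic in 2D: if `Q` solves the `(n,2)`-queens problem, `1 ≤ k < n`,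
and the corner subsquare `{n-k+1,…,n}²` contains exactly `p` queens of `Q`, then
`Q ∩ {1,…,n-k}²` is a non-attacking set of exactly `n - 2k + p` queens on the
`(n-k,2)`-board. -/
theorem subsquare_heuristic_2d (n k p : ℕ) (hk1 : 1 ≤ k) (hkn : k < n)
    (Q : Finset (Fin 2 → ℕ)) (hQ : isSolution n 2 Q)
    (hp : (Q.filter (fun q => ∀ i, n - k + 1 ≤ q i)).card = p) :
    isPartial (n - k) 2 (Q.filter (fun q => ∀ i, q i ≤ n - k)) ∧
    ((Q.filter (fun q => ∀ i, q i ≤ n - k)).card : ℤ) =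
      (n : ℤ) - 2 * k + p :=
  subsquare_heuristic_2d_general n k p hkn Q hQ hp
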